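/- Let a₁,...,a_n be a permutation of {1,...,n} viewed as a cycle with code 1(0)^{λ₁}1(0)^{λ₂}...1(0)^{λ_x} (x ones, y zeros, λ₁+...+λ_x = y). Call an index i ∈ [1,x] (K,M,N)-lucky if λ_{i+1} + ... + λ_{i+K} ≥ y - M and the last term of the maximal decreasing block encoded by the part (0)^{λ_i} is at most N. If there exists a (K,M,N)-lucky index, then the permutation a₁,...,a_n is a subsequence of the cycle (1,2,...,n) repeated M times, followed by (1,2,...,N), followed by (n,...,2,1) repeated K times. -/

import Mathlib

/-!
Rotate the cycle so that it starts at the last term `c ≤ N` of the block of the lucky index.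
Its code then reads `1 0^{μ₀} 1 0^{μ₁} ⋯ 1 0^{μ_{x-1}}` with `μ_j = λ_{i+1+j}`, so after `c` the
cycle consists of `x` decreasing runs of lengths `μ_j + 1`. The first `k = min K x` of them embed
into `k` copies of `n, …, 1`. The rest of the cycle ends with `c` and has only
`y - (μ₀ + ⋯ + μ_{k-1}) ≤ M` descents; splitting it at its descents into increasing runs embeds it
into `M` copies of `1, …, n` followed by `1, …, N`, the last run ending at `c ≤ N`. Moving the
first `k` runs to the end is a rotation of the cycle.
-/

/-- The cyclic code of a cycle `a₁,...,aₙ`: entry `i` is `H(a_{i+1} - a_i)`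
(indices mod `n`), where `H` is the Heaviside step function. -/
def cycCode (a : List ℕ) : List ℕ :=
  List.zipWith (fun u v => if v ≤ u then 1 else 0) (a.rotate 1) a

/-- The cyclic 0-1 sequence `1(0)^{λ₀} 1(0)^{λ₁} ⋯ 1(0)^{λ_{x-1}}`. -/
def codeOf (lam : ℕ → ℕ) (x : ℕ) : List ℕ :=
  ((List.range x).map (fun j => 1 :: List.replicate (lam j) 0)).flatten

open List

namespace CycleCode

def linCode (l : List ℕ) : List ℕ :=
  zipWith (fun u v => if v ≤ u then 1 else 0) l.tail l

@[simp] lemma linCode_cons_cons (a b : ℕ) (l : List ℕ) :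
    linCode (a :: b :: l) = (if a ≤ b then 1 else 0) :: linCode (b :: l) := rfl

@[simp] lemma length_linCode (l : List ℕ) : (linCode l).length = l.length - 1 := by
  simp [linCode]

lemma linCode_tail (l : List ℕ) : linCode l.tail = (linCode l).tail := by
  rcases l with _ | ⟨a, _ | ⟨b, l⟩⟩ <;> rfl

lemma linCode_drop (l : List ℕ) (k : ℕ) : linCode (l.drop k) = (linCode l).drop k := by
  induction k with
  | zero => rfl
  | succ k ih => rw [← tail_drop, linCode_tail, ih, tail_drop]

lemma linCode_take (l : List ℕ) (k : ℕ) : linCode (l.take (k + 1)) = (linCode l).take k := by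
  induction k generalizing l with
  | zero => rcases l with _ | ⟨a, _ | ⟨b, l⟩⟩ <;> rfl
  | succ k ih =>
    rcases l with _ | ⟨a, _ | ⟨b, l⟩⟩
    · rfl
    · rfl
    · have := ih (b :: l)
      simp only [take_succ_cons, linCode_cons_cons] at this ⊢
      rw [this]

lemma linCode_append_pair (l : List ℕ) (u w : ℕ) :
    linCode (l ++ [u, w]) = linCode (l ++ [u]) ++ [if u ≤ w then 1 else 0] := by
  induction l with
  | nil => rfl
  | cons a l ih =>
    rcases l with _ | ⟨b, l⟩
    · rfl
    · simp only [cons_append, linCode_cons_cons] at ih ⊢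
      rw [ih]

lemma cycCode_cons (a : ℕ) (t : List ℕ) : cycCode (a :: t) = linCode (a :: (t ++ [a])) := by
  rw [cycCode, linCode, tail_cons, rotate_cons_succ, rotate_zero, ← cons_append,
    ← append_nil (t ++ [a]), zipWith_append (by simp)]
  simp

lemma cycCode_rotate (l : List ℕ) (k : ℕ) : cycCode (l.rotate k) = (cycCode l).rotate k := by
  apply ext_getElem (by simp [cycCode])
  intro i h₁ h₂
  simp only [cycCode, getElem_rotate, getElem_zipWith, rotate_rotate, length_zipWith,
    length_rotate, min_self]
  congr 2
  simp only [Nat.mod_add_mod, Nat.add_assoc]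

lemma codeOf_succ (μ : ℕ → ℕ) (t : ℕ) :
    codeOf μ (t + 1) = 1 :: (replicate (μ 0) 0 ++ codeOf (fun j => μ (j + 1)) t) := by
  simp [codeOf, range_succ_eq_map, Function.comp_def]

lemma codeOf_congr {μ ν : ℕ → ℕ} {t : ℕ} (h : ∀ j < t, μ j = ν j) : codeOf μ t = codeOf ν t := by
  unfold codeOf
  congr 1
  exact map_congr_left fun j hj => by rw [h j (mem_range.1 hj)]

lemma codeOf_add (μ : ℕ → ℕ) (s t : ℕ) :
    codeOf μ (s + t) = codeOf μ s ++ codeOf (fun j => μ (s + j)) t := by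
  simp [codeOf, range_add, Function.comp_def]

lemma count_zero_codeOf (μ : ℕ → ℕ) (t : ℕ) :
    (codeOf μ t).count 0 = ∑ j ∈ Finset.range t, μ j := by
  induction t generalizing μ with
  | zero => rfl
  | succ t ih => simp [codeOf_succ, ih, Finset.sum_range_succ', add_comm]

lemma count_one_codeOf (μ : ℕ → ℕ) (t : ℕ) : (codeOf μ t).count 1 = t := by
  induction t generalizing μ with
  | zero => rfl
  | succ t ih => simp [codeOf_succ, count_replicate, ih]

lemma length_codeOf (μ : ℕ → ℕ) (t : ℕ) :
    (codeOf μ t).length = t + ∑ j ∈ Finset.range t, μ j := by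
  induction t generalizing μ with
  | zero => rfl
  | succ t ih => simp [codeOf_succ, ih, Finset.sum_range_succ']; omega

lemma codeOf_rotate_length (μ : ℕ → ℕ) {s x : ℕ} (hs : s ≤ x) :
    (codeOf μ x).rotate (codeOf μ s).length = codeOf (fun j => μ ((s + j) % x)) x := by
  obtain ⟨t, rfl⟩ := Nat.exists_eq_add_of_le hs
  rw [codeOf_add, rotate_append_length_eq, add_comm s t, codeOf_add]
  congr 1
  · exact codeOf_congr fun j hj => by rw [Nat.mod_eq_of_lt (by omega)]
  · exact codeOf_congr fun j hj => by
      rw [show s + (t + j) = (t + s) + j by omega, Nat.add_mod_left, Nat.mod_eq_of_lt (by omega)]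

theorem sublist_of_count_zero_linCode_le {n m N : ℕ} {l : List ℕ} (hl : l ⊆ range' 1 n)
    (hne : l.IsChain (· ≠ ·)) (hlast : ∀ w ∈ l.getLast?, w ≤ N)
    (hm : (linCode l).count 0 ≤ m) :
    l <+ (replicate m (range' 1 n)).flatten ++ range' 1 N := by
  -- After an ascent `u < w`, the prefix ending in `u` fits before `w` into `1, …, w - 1`.
  induction l using reverseRecOn generalizing m N with
  | nil => exact nil_sublist _
  | append_singleton t w ih =>
    have hw : 1 ≤ w ∧ w ≤ N := ⟨(mem_range'_1.1 (hl (by simp))).1, hlast w (by simp)⟩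
    have hw' : [w] <+ range' 1 N := singleton_sublist.2 (mem_range'_1.2 (by omega))
    rcases eq_nil_or_concat' t with rfl | ⟨t, u, rfl⟩
    · exact hw'.trans (sublist_append_right _ _)
    have ht : t ++ [u] ⊆ range' 1 n := Subset.trans (subset_append_left _ _) hl
    have hu : u ≤ n := by
      have := mem_range'_1.1 (ht (mem_append_right _ (mem_singleton_self u)))
      omega
    have hne' : (t ++ [u]).IsChain (· ≠ ·) := hne.left_of_append
    have huw : u ≠ w := (isChain_append.1 hne).2.2 u (by simp) w (by simp)
    rw [append_assoc, singleton_append, linCode_append_pair, count_append] at hm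
    rcases Nat.lt_or_gt_of_ne huw with huw | huw
    · rw [if_pos huw.le, show count 0 [1] = 0 from rfl, add_zero] at hm
      obtain ⟨w, rfl⟩ : ∃ w', w = w' + 1 := ⟨w - 1, by omega⟩
      have hsub := ih (N := w) ht hne' (by simpa using huw) hm
      calc t ++ [u] ++ [w + 1]
          <+ (replicate m (range' 1 n)).flatten ++ range' 1 w ++ [w + 1] := hsub.append_right _
        _ = (replicate m (range' 1 n)).flatten ++ range' 1 (w + 1) := by
          rw [range'_concat, append_assoc, Nat.one_mul, Nat.add_comm 1 w]
        _ <+ (replicate m (range' 1 n)).flatten ++ range' 1 N :=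
          (range'_sublist_right.2 hw.2).append_left _
    · rw [if_neg (not_le.2 huw), show count 0 [0] = 1 from rfl] at hm
      obtain ⟨m, rfl⟩ : ∃ m', m = m' + 1 := ⟨m - 1, by omega⟩
      have hsub := ih (m := m) (N := n) ht hne' (by simpa using hu) (by omega)
      rw [replicate_succ', flatten_append, flatten_singleton]
      exact hsub.append hw'

theorem sublist_of_count_one_linCode_le {n m N : ℕ} {l : List ℕ} (hl : l ⊆ range' 1 n)
    (hne : l.IsChain (· ≠ ·)) (hhead : ∀ a ∈ l.head?, a ≤ N)
    (hm : (linCode l).count 1 ≤ m) :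
    l <+ (range' 1 N).reverse ++ (replicate m (range' 1 n).reverse).flatten := by
  induction l generalizing m N with
  | nil => exact nil_sublist _
  | cons a t ih =>
    have ha : 1 ≤ a ∧ a ≤ N := ⟨(mem_range'_1.1 (hl mem_cons_self)).1, hhead a rfl⟩
    have ha' : [a] <+ (range' 1 N).reverse := singleton_sublist.2 (by simp; omega)
    rcases t with _ | ⟨b, t⟩
    · exact ha'.trans (sublist_append_left _ _)
    have ht : b :: t ⊆ range' 1 n := Subset.trans (subset_cons_self _ _) hl
    have hb : b ≤ n := by have := mem_range'_1.1 (ht mem_cons_self); omega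
    obtain ⟨hab, hne'⟩ := isChain_cons_cons.1 hne
    rw [linCode_cons_cons] at hm
    rcases Nat.lt_or_gt_of_ne hab with hab | hab
    · rw [if_pos hab.le, count_cons_self] at hm
      obtain ⟨m, rfl⟩ : ∃ m', m = m' + 1 := ⟨m - 1, by omega⟩
      have hsub := ih (m := m) (N := n) ht hne' (by simpa using hb) (by omega)
      rw [replicate_succ, flatten_cons]
      exact ha'.append hsub
    · rw [if_neg (not_le.2 hab), count_cons_of_ne zero_ne_one] at hm
      obtain ⟨a, rfl⟩ : ∃ a', a = a' + 1 := ⟨a - 1, by omega⟩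
      have hsub := ih (N := a) ht hne' (by simpa using hab) hm
      calc (a + 1) :: b :: t
          <+ (a + 1) :: ((range' 1 a).reverse ++ (replicate m (range' 1 n).reverse).flatten) :=
            hsub.cons_cons _
        _ = (range' 1 (a + 1)).reverse ++ (replicate m (range' 1 n).reverse).flatten := by
          rw [range'_concat, reverse_append, Nat.one_mul, Nat.add_comm 1 a]; rfl
        _ <+ (range' 1 N).reverse ++ (replicate m (range' 1 n).reverse).flatten :=
          (reverse_sublist.2 (range'_sublist_right.2 ha.2)).append_right _

theorem take_sublist_of_linCode_eq {n k c : ℕ} {μ : ℕ → ℕ} {g rest : List ℕ}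
    (hg : g ⊆ range' 1 n) (hne : g.IsChain (· ≠ ·))
    (hcode : linCode (c :: g) = codeOf μ k ++ rest) :
    g.take (codeOf μ k).length <+ (replicate k (range' 1 n).reverse).flatten := by
  rcases k with _ | k
  · simp [codeOf]
  have hD : linCode (g.take (codeOf μ (k + 1)).length) = (codeOf μ (k + 1)).tail := by
    rw [show g.take _ = ((c :: g).take ((codeOf μ (k + 1)).length + 1)).tail from rfl,
      linCode_tail, linCode_take, hcode, take_left]
  have hDn : g.take (codeOf μ (k + 1)).length ⊆ range' 1 n :=
    Subset.trans (take_sublist _ _).subset hg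
  have hsub := sublist_of_count_one_linCode_le (m := k) (N := n) hDn (hne.take _)
    (fun a ha => by have := mem_range'_1.1 (hDn (mem_of_mem_head? ha)); omega)
    (by rw [hD, codeOf_succ]; simp [count_replicate, count_one_codeOf])
  rwa [replicate_succ, flatten_cons]

theorem drop_sublist_of_linCode_eq {n k M N c : ℕ} {μ : ℕ → ℕ} {g rest : List ℕ}
    (hg : g ⊆ range' 1 n) (hne : g.IsChain (· ≠ ·)) (hlast : g.getLast? = some c) (hc : c ≤ N)
    (hcode : linCode (c :: g) = codeOf μ k ++ rest) (hM : rest.count 0 ≤ M) :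
    g.drop (codeOf μ k).length <+ (replicate M (range' 1 n)).flatten ++ range' 1 N := by
  have hF : linCode (g.drop (codeOf μ k).length) = rest.drop 1 := by
    rw [show g.drop _ = (c :: g).drop ((codeOf μ k).length + 1) from rfl, linCode_drop, hcode,
      drop_length_add_append]
  refine sublist_of_count_zero_linCode_le (Subset.trans (drop_sublist _ _).subset hg)
    (hne.drop _) ?_ (hF ▸ ((drop_sublist _ _).count_le 0).trans hM)
  rw [getLast?_drop, hlast]
  split <;> simp [hc]

theorem exists_rotate_sublist_of_cycCode_eq {n x K M N : ℕ} {μ : ℕ → ℕ} {d : List ℕ}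
    (hd : d.Nodup) (hdn : d ⊆ range' 1 n) (hcode : cycCode d = codeOf μ x)
    (hN : ∀ c ∈ d.head?, c ≤ N)
    (hM : ∑ j ∈ Finset.range x, μ j ≤ M + ∑ j ∈ Finset.range K, μ j) :
    ∃ s, d.rotate s <+ (replicate M (range' 1 n)).flatten ++ range' 1 N ++
      (replicate K (range' 1 n).reverse).flatten := by
  rcases d with _ | ⟨c, t⟩
  · exact ⟨0, nil_sublist _⟩
  set k := min K x
  have hcg : linCode (c :: (t ++ [c])) = codeOf μ k ++ codeOf (fun j => μ (k + j)) (x - k) := by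
    rw [← codeOf_add, Nat.add_sub_cancel' (min_le_right _ _), ← hcode, cycCode_cons]
  have hg : t ++ [c] ⊆ range' 1 n := fun v hv => hdn (by simpa [or_comm] using hv)
  have hne : (t ++ [c]).IsChain (· ≠ ·) := by
    have := (nodup_rotate (n := 1)).2 hd
    rw [rotate_cons_succ, rotate_zero] at this
    exact Pairwise.isChain this
  have hrest : (codeOf (fun j => μ (k + j)) (x - k)).count 0 ≤ M := by
    have hsum : ∑ j ∈ Finset.range x, μ j
        = ∑ j ∈ Finset.range k, μ j + (codeOf (fun j => μ (k + j)) (x - k)).count 0 := by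
      rw [← count_zero_codeOf, ← count_zero_codeOf, ← count_append, ← codeOf_add,
        Nat.add_sub_cancel' (min_le_right _ _)]
    obtain hk | hk : k = K ∨ k = x := min_choice K x
    · rw [hk] at hsum ⊢
      omega
    · simp [hk, codeOf]
  have hF := drop_sublist_of_linCode_eq hg hne getLast?_concat (hN c rfl) hcg hrest
  have hD := take_sublist_of_linCode_eq hg hne hcg
  have hlen : (codeOf μ k).length ≤ (t ++ [c]).length := by
    have := congrArg length hcg
    simp only [length_linCode, length_append, length_cons] at this ⊢
    omega
  refine ⟨1 + (codeOf μ k).length, ?_⟩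
  rw [← rotate_rotate, rotate_cons_succ, rotate_zero, rotate_eq_drop_append_take hlen]
  exact hF.append (hD.trans (Sublist.flatten ((replicate_sublist_replicate _).2 (min_le_left _ _))))

theorem exists_sublist_rotate_of_rotate_sublist {α : Type*} {u w : List α} {s : ℕ}
    (h : u.rotate s <+ w) : ∃ j, u <+ w.rotate j := by
  rw [rotate_eq_drop_append_take_mod] at h
  obtain ⟨w₁, w₂, rfl, h₁, h₂⟩ := append_sublist_iff.1 h
  refine ⟨w₁.length, ?_⟩
  rw [rotate_append_length_eq, ← take_append_drop (s % u.length) u]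
  exact h₂.append h₁

end CycleCode

open CycleCode

theorem lemma_two_general (n x y K M N : ℕ)
    (a : List ℕ) (ha : a.Perm (List.range' 1 n))
    (lam : ℕ → ℕ) (hlam : ∑ j ∈ Finset.range x, lam j = y)
    (r : ℕ) (hcode : cycCode (a.rotate r) = codeOf lam x)
    (i : ℕ) (hix : i < x)
    -- the index `i` is `(K, M, N)`-lucky:
    (hlucky1 : y ≤ M + ∑ j ∈ Finset.range K, lam ((i + 1 + j) % x))
    (hlucky2 : (a.rotate r).getD
        (((∑ j ∈ Finset.range i, (1 + lam j)) + lam i + 1) % n) 0 ≤ N) :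
    ∃ j, a.Sublist
      (((List.replicate M (List.range' 1 n)).flatten ++ List.range' 1 N ++
        (List.replicate K (List.range' 1 n).reverse).flatten).rotate j) := by
  set P := (codeOf lam (i + 1)).length
  have hlen : (a.rotate r).length = n := by simp [ha.length_eq]
  have hP : ∑ j ∈ Finset.range i, (1 + lam j) + lam i + 1 = P := by
    simp [P, length_codeOf, Finset.sum_add_distrib, Finset.sum_range_succ]
    omega
  have hrot := codeOf_rotate_length lam (s := i + 1) hix
  have hsum : ∑ j ∈ Finset.range x, lam ((i + 1 + j) % x) = y := by
    have := congrArg length hrot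
    rw [length_rotate, length_codeOf, length_codeOf] at this
    omega
  have hN : ∀ c ∈ ((a.rotate r).rotate P).head?, c ≤ N := by
    intro c hc
    have hn0 : 0 < n := hlen ▸ length_pos_of_mem (mem_rotate.1 (mem_of_mem_head? hc))
    rw [← rotate_mod, head?_rotate (by rw [hlen]; exact Nat.mod_lt _ hn0), hlen] at hc
    rwa [hP, getD_eq_getElem?_getD, hc] at hlucky2
  obtain ⟨s, hs⟩ := exists_rotate_sublist_of_cycCode_eq
    (nodup_rotate.2 (nodup_rotate.2 (ha.nodup_iff.2 (nodup_range' ..))))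
    (fun v hv => ha.subset (mem_rotate.1 (mem_rotate.1 hv))) (by rw [cycCode_rotate, hcode, hrot])
    hN (hsum.trans_le hlucky1)
  rw [rotate_rotate, rotate_rotate] at hs
  exact exists_sublist_rotate_of_rotate_sublist hs

theorem lemma_two (n x y K M N : ℕ) (hn : 1 < n) (hx : 0 < x) (hxy : x + y = n)
    (a : List ℕ) (ha : a.Perm (List.range' 1 n))
    (lam : ℕ → ℕ) (hlam : ∑ j ∈ Finset.range x, lam j = y)
    (r : ℕ) (hcode : cycCode (a.rotate r) = codeOf lam x)
    (i : ℕ) (hix : i < x)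
    -- the index `i` is `(K, M, N)`-lucky:
    (hlucky1 : y ≤ M + ∑ j ∈ Finset.range K, lam ((i + 1 + j) % x))
    (hlucky2 : (a.rotate r).getD
        (((∑ j ∈ Finset.range i, (1 + lam j)) + lam i + 1) % n) 0 ≤ N) :
    ∃ j, a.Sublist
      (((List.replicate M (List.range' 1 n)).flatten ++ List.range' 1 N ++
        (List.replicate K (List.range' 1 n).reverse).flatten).rotate j) :=
  lemma_two_general n x y K M N a ha lam hlam r hcode i hix hlucky1 hlucky2
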